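/- arXiv:1004.3655 — 5 statements merged into one kernel-verified Lean document; each statement's English description precedes it below -/
import Mathlib

section
/- Call a subset t ⊆ ℕ thin if the sequence (card(t ∩ {0,…,n−1})/n)_{n∈ℕ} converges to 0, and let 𝔗 be the set of all thin subsets of ℕ. Then every infinite subset a ⊆ ℕ contains an infinite thin subset (e.g. if (α_n) enumerates a in increasing order then {α_{n²} : n ∈ ℕ} is thin), and consequently 𝔗^⊥⊥ = 𝒫(ℕ), although 𝔗 ≠ 𝒫(ℕ). Hence 𝔗 is not a finiteness structure even though it contains all finite subsets of ℕ, is downward closed for inclusion, and is closed under finite unions. -/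
/-
Enumerating an infinite `a ⊆ ℕ` increasingly as `α₀ < α₁ < ⋯`, the set `{α_{j²}}` has at most
`√n + 1` elements below `n`, since `j² ≤ α_{j²}`; so it is an infinite thin subset of `a`.
Hence a set meeting every thin set finitely is finite, the predual of 𝔗 is the set of finite
sets, and the bidual of 𝔗 is all of `𝒫(ℕ)`. But `ℕ` itself is not thin.
-/

open Set Filter

namespace FinitenessPaper

/-- The predual of a set `F` of subsets of `A`:
all subsets of `A` whose intersection with every member of `F` is finite. -/
def predual {α : Type*} (A : Set α) (F : Set (Set α)) : Set (Set α) :=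
  {a' | a' ⊆ A ∧ ∀ a ∈ F, (a ∩ a').Finite}

/-- A subset `t ⊆ ℕ` is thin if `card (t ∩ {0,…,n-1}) / n` tends to `0`. -/
def Thin (t : Set ℕ) : Prop :=
  Tendsto (fun n : ℕ => ((t ∩ Set.Iio n).ncard : ℝ) / n) atTop (nhds 0)

open Topology

theorem Thin.of_ncard_le {t : Set ℕ} (f : ℕ → ℝ) (hle : ∀ n, ((t ∩ Iio n).ncard : ℝ) ≤ f n)
    (hf : Tendsto (fun n : ℕ => f n / n) atTop (𝓝 0)) : Thin t :=
  squeeze_zero (fun _ => by positivity) (fun n => by gcongr; exact hle n) hf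

theorem Thin.mono {t t' : Set ℕ} (h : t' ⊆ t) (ht : Thin t) : Thin t' :=
  Thin.of_ncard_le _ (fun n => by
    exact_mod_cast ncard_le_ncard (inter_subset_inter_left _ h) ((finite_Iio n).inter_of_right t))
    ht

theorem Thin.union {t t' : Set ℕ} (ht : Thin t) (ht' : Thin t') : Thin (t ∪ t') := by
  refine Thin.of_ncard_le (fun n => (t ∩ Iio n).ncard + (t' ∩ Iio n).ncard) (fun n => ?_)
    (by simpa only [add_div, add_zero] using ht.add ht')
  rw [union_inter_distrib_right]
  exact_mod_cast ncard_union_le _ _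

theorem thin_of_finite {t : Set ℕ} (ht : t.Finite) : Thin t :=
  Thin.of_ncard_le (fun _ => t.ncard)
    (fun n => by exact_mod_cast ncard_le_ncard inter_subset_left ht)
    (tendsto_const_div_atTop_nhds_zero_nat _)

theorem not_thin_univ : ¬ Thin (univ : Set ℕ) := by
  intro h
  have hone : Tendsto (fun n : ℕ => ((univ ∩ Iio n).ncard : ℝ) / n) atTop (𝓝 1) := by
    refine tendsto_const_nhds.congr' ?_
    filter_upwards [eventually_ne_atTop 0] with n hn
    rw [univ_inter, ← Finset.coe_Iio, ncard_coe_finset, Nat.card_Iio, div_self (by positivity)]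
  exact one_ne_zero (tendsto_nhds_unique hone h)

theorem ncard_range_inter_Iio_le {g : ℕ → ℕ} (hg : ∀ j, j * j ≤ g j) (n : ℕ) :
    (range g ∩ Iio n).ncard ≤ Nat.sqrt n + 1 := by
  have hsub : range g ∩ Iio n ⊆ g '' ↑(Finset.range (Nat.sqrt n + 1)) := by
    rintro _ ⟨⟨j, rfl⟩, hj⟩
    exact ⟨j, by simpa [Nat.lt_succ_iff, Nat.le_sqrt] using (hg j).trans hj.le, rfl⟩
  calc (range g ∩ Iio n).ncard ≤ (g '' ↑(Finset.range (Nat.sqrt n + 1))).ncard :=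
        ncard_le_ncard hsub (Finset.finite_toSet _ |>.image g)
    _ ≤ (Finset.range (Nat.sqrt n + 1) : Set ℕ).ncard := ncard_image_le (Finset.finite_toSet _)
    _ = Nat.sqrt n + 1 := by rw [ncard_coe_finset, Finset.card_range]

theorem tendsto_sqrt_add_one_div :
    Tendsto (fun n : ℕ => ((Nat.sqrt n : ℝ) + 1) / n) atTop (𝓝 0) := by
  have hsqrt : Tendsto (fun n : ℕ => (Nat.sqrt n : ℝ)) atTop atTop :=
    tendsto_natCast_atTop_atTop.comp <|
      tendsto_atTop_atTop.2 fun b => ⟨b * b, fun n hn => Nat.le_sqrt.2 hn⟩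
  refine squeeze_zero' (.of_forall fun _ => by positivity) ?_
    (tendsto_const_nhds (x := (2 : ℝ)).div_atTop hsqrt)
  filter_upwards [eventually_ge_atTop 1] with n hn
  have hs : (1 : ℝ) ≤ Nat.sqrt n := by exact_mod_cast Nat.le_sqrt.2 (by simpa using hn)
  have hsn : (Nat.sqrt n : ℝ) * Nat.sqrt n ≤ n := by exact_mod_cast Nat.sqrt_le n
  calc ((Nat.sqrt n : ℝ) + 1) / n ≤ 2 * Nat.sqrt n / (Nat.sqrt n * Nat.sqrt n) :=
        div_le_div₀ (by positivity) (by linarith) (by positivity) hsn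
    _ = 2 / Nat.sqrt n := by field_simp

theorem thin_range_of_mul_self_le {g : ℕ → ℕ} (hg : ∀ j, j * j ≤ g j) : Thin (range g) :=
  Thin.of_ncard_le _ (fun n => by exact_mod_cast ncard_range_inter_Iio_le hg n)
    tendsto_sqrt_add_one_div

theorem exists_infinite_thin_subset {a : Set ℕ} (ha : a.Infinite) :
    ∃ t ⊆ a, t.Infinite ∧ Thin t := by
  set g : ℕ → ℕ := fun j => Nat.nth (· ∈ a) (j * j)
  have hmono : StrictMono g := fun i j hij =>
    Nat.nth_strictMono ha (Nat.mul_self_lt_mul_self hij)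
  refine ⟨range g, ?_, infinite_range_of_injective hmono.injective,
    thin_range_of_mul_self_le fun j => Nat.le_nth fun hf => absurd hf ha⟩
  rintro _ ⟨j, rfl⟩
  exact Nat.nth_mem_of_infinite ha _

theorem predual_univ_thin : predual univ {t : Set ℕ | Thin t} = {a | a.Finite} := by
  ext a
  refine ⟨fun ⟨_, hfin⟩ => ?_, fun ha => ⟨subset_univ a, fun t _ => ha.inter_of_right t⟩⟩
  by_contra hinf
  obtain ⟨t, hta, htinf, htthin⟩ := exists_infinite_thin_subset hinf
  exact htinf ((hfin t htthin).subset (subset_inter subset_rfl hta))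

theorem predual_univ_finite (α : Type*) : predual univ {a : Set α | a.Finite} = univ :=
  eq_univ_of_forall fun a => ⟨subset_univ a, fun _ ha => ha.inter_of_left a⟩

/-- The set 𝔗 of thin subsets of ℕ is a "fake" finiteness structure: every infinite
subset of ℕ contains an infinite thin subset, hence 𝔗^⊥⊥ = 𝒫(ℕ) while 𝔗 ≠ 𝒫(ℕ);
so 𝔗 is not a finiteness structure, even though it contains all finite sets, is
downward closed for inclusion and closed under finite unions. -/
theorem thin_fake_finiteness_structure :
    (∀ a : Set ℕ, a.Infinite → ∃ t : Set ℕ, t ⊆ a ∧ t.Infinite ∧ Thin t) ∧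
    predual Set.univ (predual Set.univ {t : Set ℕ | Thin t}) = Set.univ ∧
    {t : Set ℕ | Thin t} ≠ Set.univ ∧
    predual Set.univ (predual Set.univ {t : Set ℕ | Thin t}) ≠ {t : Set ℕ | Thin t} ∧
    (∀ t : Set ℕ, t.Finite → Thin t) ∧
    (∀ t t' : Set ℕ, t' ⊆ t → Thin t → Thin t') ∧
    (∀ t t' : Set ℕ, Thin t → Thin t' → Thin (t ∪ t')) := by
  have hbidual : predual univ (predual univ {t : Set ℕ | Thin t}) = univ := by
    rw [predual_univ_thin, predual_univ_finite]
  have hthin_ne : {t : Set ℕ | Thin t} ≠ univ := fun h =>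
    not_thin_univ (eq_univ_iff_forall.mp h univ)
  exact ⟨fun _ => exists_infinite_thin_subset, hbidual, hthin_ne,
    hbidual ▸ hthin_ne.symm, fun _ => thin_of_finite, fun _ _ => Thin.mono,
    fun _ _ => Thin.union⟩

end FinitenessPaper
end

section
/- For each n ∈ ℕ let †_n = {(p,q) ∈ ℕ×ℕ : p = n or q = n}, and let 𝔠_n be the predual on ℕ×ℕ of {†_p : p ≥ n}. Then the sequence (𝔠_n) is increasing for inclusion, and its union 𝔠 = ⋃_{n∈ℕ} 𝔠_n satisfies 𝔠^⊥ = {finite subsets of ℕ×ℕ}, hence 𝔠^⊥⊥ = 𝒫(ℕ×ℕ), while 𝔠 ≠ 𝒫(ℕ×ℕ). In particular 𝔠 is an increasing union of finiteness structures which is not a finiteness structure. -/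
/-!
Distinct daggers meet in at most two points, so `†_p ∈ 𝔠_{p+1}`. A set `c ∈ 𝔠^⊥` therefore meets
every `†_p` finitely, which puts `c` itself in `𝔠_0 ⊆ 𝔠`; then `c = c ∩ c` is finite. Consequently
`𝔠^⊥⊥ = 𝒫(ℕ×ℕ)`, whereas `ℕ×ℕ ∉ 𝔠_n` because it meets the infinite set `†_n` infinitely.
-/

open Set

namespace FinitenessPaper

/-- `†_n = {(p,q) : p = n ∨ q = n}`. -/
def dagger (n : ℕ) : Set (ℕ × ℕ) := {p | p.1 = n ∨ p.2 = n}

/-- `𝔠_n` is the predual (on ℕ×ℕ) of `{†_p : p ≥ n}`. -/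
def cfrak (n : ℕ) : Set (Set (ℕ × ℕ)) :=
  predual Set.univ {d | ∃ p, n ≤ p ∧ d = dagger p}

section Predual

variable {α : Type*}

lemma predual_anti {A : Set α} {F G : Set (Set α)} (h : F ⊆ G) : predual A G ⊆ predual A F :=
  fun _ ⟨hA, hG⟩ => ⟨hA, fun a ha => hG a (h ha)⟩

lemma subset_predual_predual (F : Set (Set α)) : F ⊆ predual univ (predual univ F) :=
  fun a ha => ⟨subset_univ a, fun b hb => inter_comm a b ▸ hb.2 a ha⟩

lemma predual_predual_predual (F : Set (Set α)) :
    predual univ (predual univ (predual univ F)) = predual univ F :=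
  (predual_anti (subset_predual_predual F)).antisymm (subset_predual_predual _)

lemma mem_predual_of_finite {F : Set (Set α)} {c : Set α} (hc : c.Finite) : c ∈ predual univ F :=
  ⟨subset_univ c, fun a _ => hc.inter_of_right a⟩

lemma predual_setOf_finite : predual univ {c : Set α | c.Finite} = univ :=
  eq_univ_of_forall fun a => ⟨subset_univ a, fun _ hc => hc.inter_of_left a⟩

lemma finite_of_mem_predual_of_mem {A : Set α} {F : Set (Set α)} {a : Set α}
    (hF : a ∈ F) (hP : a ∈ predual A F) : a.Finite :=
  inter_self a ▸ hP.2 a hF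

lemma univ_notMem_predual {F : Set (Set α)} {a : Set α} (hF : a ∈ F) (ha : a.Infinite) :
    univ ∉ predual univ F :=
  fun h => ha (inter_univ a ▸ h.2 a hF)

end Predual

lemma dagger_infinite (n : ℕ) : (dagger n).Infinite :=
  infinite_of_injective_forall_mem (f := fun q : ℕ => (n, q))
    (fun _ _ h => congrArg Prod.snd h) (fun _ => Or.inl rfl)

lemma dagger_inter_dagger_finite {p q : ℕ} (h : p ≠ q) : (dagger p ∩ dagger q).Finite := by
  apply (toFinite {(p, q), (q, p)}).subset
  rintro ⟨x, y⟩ ⟨hx | hx, hy | hy⟩ <;> simp_all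

lemma dagger_mem_cfrak_succ (p : ℕ) : dagger p ∈ cfrak (p + 1) :=
  ⟨subset_univ _, by rintro _ ⟨q, hq, rfl⟩; exact dagger_inter_dagger_finite (by omega)⟩

lemma cfrak_mono : Monotone cfrak :=
  fun _ _ hmn => predual_anti fun _ ⟨p, hp, hd⟩ => ⟨p, hmn.trans hp, hd⟩

lemma predual_iUnion_cfrak : predual univ (⋃ n, cfrak n) = {c | c.Finite} := by
  ext c
  refine ⟨fun hc => ?_, mem_predual_of_finite⟩
  by_cases hdagger : ∀ p, (dagger p ∩ c).Finite
  · have hc₀ : c ∈ cfrak 0 := ⟨subset_univ c, by rintro _ ⟨p, -, rfl⟩; exact hdagger p⟩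
    exact finite_of_mem_predual_of_mem (mem_iUnion.2 ⟨0, hc₀⟩) hc
  · obtain ⟨p, hp⟩ := not_forall.1 hdagger
    exact absurd (hc.2 _ (mem_iUnion.2 ⟨p + 1, dagger_mem_cfrak_succ p⟩)) hp

/-- The sequence `(𝔠_n)` is increasing, each `𝔠_n` is a finiteness structure,
but the union `𝔠 = ⋃ₙ 𝔠ₙ` has `𝔠^⊥` the finite sets, hence `𝔠^⊥⊥ = 𝒫(ℕ×ℕ) ≠ 𝔠`:
an increasing union of finiteness structures need not be a finiteness structure. -/
theorem cfrak_increasing_union_not_finiteness_structure :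
    (∀ m n : ℕ, m ≤ n → cfrak m ⊆ cfrak n) ∧
    (∀ n : ℕ, predual Set.univ (predual Set.univ (cfrak n)) = cfrak n) ∧
    predual Set.univ (⋃ n, cfrak n) = {c : Set (ℕ × ℕ) | c.Finite} ∧
    predual Set.univ (predual Set.univ (⋃ n, cfrak n)) = Set.univ ∧
    (⋃ n, cfrak n) ≠ Set.univ := by
  refine ⟨fun _ _ hmn => cfrak_mono hmn, fun _ => predual_predual_predual _, predual_iUnion_cfrak,
    by rw [predual_iUnion_cfrak, predual_setOf_finite], fun hunion => ?_⟩
  obtain ⟨n, hn⟩ := mem_iUnion.1 (hunion ▸ mem_univ (univ : Set (ℕ × ℕ)))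
  exact univ_notMem_predual (by exact ⟨n, le_rfl, rfl⟩) (dagger_infinite n) hn

end FinitenessPaper
end

section
/- (Transport lemma) Let A be a set, ℬ a finiteness space, and f ⊆ A × |ℬ| a relation such that f[{α}] ∈ F(ℬ) for all α ∈ A. Then 𝔗(ℬ,f) := {a ⊆ A : f[a] ∈ F(ℬ)} is a finiteness structure on A, and moreover 𝔗(ℬ,f) = ({f ÷ b : b ∈ F(ℬ)})^⊥⊥. -/
/-!
A subset `a ⊆ A` is in `𝔗(ℬ, f)` exactly when it lies in `({f ÷ b : b ∈ F(ℬ)})^⊥⊥`, and a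
bidual is always a finiteness structure. One inclusion holds because `a ⊆ f ÷ f[a]`. For the
other, given `b' ∈ F(ℬ)^⊥`, choose for each `β ∈ f[a] ∩ b'` a preimage `g β ∈ a`: the set
`g[f[a] ∩ b']` meets each `f ÷ b` only in `g[b ∩ b']`, so it is finite, and then
`f[a] ∩ b'` is covered by finitely many of the finite sets `f[{α}] ∩ b'`.
-/

open Set

namespace FinitenessPaper

/-- A finiteness space: a web together with a finiteness structure on it. -/
structure FinSpace (α : Type*) where
  web : Set α
  fin : Set (Set α)
  isFin : predual web (predual web fin) = fin

/-- Direct image of a set under a relation. -/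
def rimage {α β : Type*} (f : Set (α × β)) (a : Set α) : Set β := {y | ∃ x ∈ a, (x, y) ∈ f}

/-- Division of `b` by the relation `f`, relative to the domain `A`:
`{x ∈ A : f[{x}] ⊆ b}`. -/
def rdiv {α β : Type*} (A : Set α) (f : Set (α × β)) (b : Set β) : Set α :=
  {x | x ∈ A ∧ ∀ y, (x, y) ∈ f → y ∈ b}

section Predual

variable {α : Type*} {A : Set α} {F G : Set (Set α)}

lemma predual_antitone (h : F ⊆ G) : predual A G ⊆ predual A F :=
  fun _ ha' => ⟨ha'.1, fun a ha => ha'.2 a (h ha)⟩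

lemma mem_predual_of_subset {a d : Set α} (ha : a ⊆ A) (hd : d ∈ predual A F) (had : a ⊆ d) :
    a ∈ predual A F :=
  ⟨ha, fun e he => (hd.2 e he).subset (inter_subset_inter_right e had)⟩

lemma subset_predual_predual_s4 (h : ∀ a ∈ F, a ⊆ A) : F ⊆ predual A (predual A F) :=
  fun a ha => ⟨h a ha, fun a' ha' => by rw [inter_comm]; exact ha'.2 a ha⟩

lemma predual_predual_predual_s4 (h : ∀ a ∈ F, a ⊆ A) :
    predual A (predual A (predual A F)) = predual A F :=
  subset_antisymm (predual_antitone (subset_predual_predual_s4 h))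
    (subset_predual_predual_s4 fun _ ha => ha.1)

end Predual

lemma FinSpace.mem_fin_iff {β : Type*} (B : FinSpace β) {b : Set β} :
    b ∈ B.fin ↔ b ⊆ B.web ∧ ∀ b' ∈ predual B.web B.fin, (b' ∩ b).Finite := by
  nth_rw 1 [← B.isFin]
  rfl

section Relation

variable {α β : Type*} {A : Set α} {f : Set (α × β)}

lemma rimage_subset_of_subset_prod {W : Set β} (hf : f ⊆ A ×ˢ W) (a : Set α) :
    rimage f a ⊆ W :=
  fun _ ⟨_, _, hxy⟩ => (hf hxy).2

lemma subset_rdiv_rimage {a : Set α} (ha : a ⊆ A) : a ⊆ rdiv A f (rimage f a) :=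
  fun x hx => ⟨ha hx, fun _ hy => ⟨x, hx, hy⟩⟩

lemma rdiv_subset (b : Set β) : rdiv A f b ⊆ A := fun _ hx => hx.1

lemma finite_rimage_inter_of_mem_predual_predual {G : Set (Set β)} {a : Set α} {b' : Set β}
    (ha : a ∈ predual A (predual A {d | ∃ b ∈ G, d = rdiv A f b}))
    (hb' : ∀ b ∈ G, (b ∩ b').Finite) (hpt : ∀ x ∈ a, (rimage f {x} ∩ b').Finite) :
    (rimage f a ∩ b').Finite := by
  rcases isEmpty_or_nonempty α with _ | _
  · simp [rimage]
  have hpre : ∀ y ∈ rimage f a ∩ b', ∃ x, x ∈ a ∧ (x, y) ∈ f := fun _ ⟨⟨x, hx, hxy⟩, _⟩ =>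
    ⟨x, hx, hxy⟩
  choose! g hga hgf using hpre
  have hga' : g '' (rimage f a ∩ b') ⊆ a := image_subset_iff.2 hga
  have hdual : g '' (rimage f a ∩ b') ∈ predual A {d | ∃ b ∈ G, d = rdiv A f b} := by
    refine ⟨hga'.trans ha.1, ?_⟩
    rintro _ ⟨b, hb, rfl⟩
    refine ((hb' b hb).image g).subset ?_
    rintro _ ⟨hxb, y, hy, rfl⟩
    exact ⟨y, ⟨hxb.2 y (hgf y hy), hy.2⟩, rfl⟩
  have hfin : (g '' (rimage f a ∩ b')).Finite := by
    simpa only [inter_eq_left.2 hga'] using ha.2 _ hdual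
  refine (hfin.biUnion fun x hx => hpt x (hga' hx)).subset ?_
  intro y hy
  exact mem_biUnion (mem_image_of_mem g hy) ⟨⟨g y, rfl, hgf y hy⟩, hy.2⟩

end Relation

/-- Transport lemma: if `f ⊆ A × |ℬ|` maps every element of `A` to a finitary
subset of `ℬ`, then `{a ⊆ A : f[a] ∈ F(ℬ)}` is a finiteness structure on `A`,
equal to `({f ÷ b : b ∈ F(ℬ)})^⊥⊥`. -/
theorem transport {α β : Type*} (A : Set α) (B : FinSpace β)
    (f : Set (α × β)) (hf_sub : f ⊆ A ×ˢ B.web)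
    (hf : ∀ x ∈ A, rimage f {x} ∈ B.fin) :
    predual A (predual A {a | a ⊆ A ∧ rimage f a ∈ B.fin})
        = {a | a ⊆ A ∧ rimage f a ∈ B.fin} ∧
    {a | a ⊆ A ∧ rimage f a ∈ B.fin}
        = predual A (predual A {d | ∃ b ∈ B.fin, d = rdiv A f b}) := by
  set D : Set (Set α) := {d | ∃ b ∈ B.fin, d = rdiv A f b}
  have hD : ∀ d ∈ D, d ⊆ A := by rintro _ ⟨b, _, rfl⟩; exact rdiv_subset b
  have key : {a | a ⊆ A ∧ rimage f a ∈ B.fin} = predual A (predual A D) := by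
    refine subset_antisymm ?_ ?_
    · rintro a ⟨haA, hfa⟩
      exact mem_predual_of_subset haA (subset_predual_predual_s4 hD ⟨_, hfa, rfl⟩)
        (subset_rdiv_rimage haA)
    · intro a ha
      refine ⟨ha.1, B.mem_fin_iff.2 ⟨rimage_subset_of_subset_prod hf_sub a, fun b' hb' => ?_⟩⟩
      rw [inter_comm]
      exact finite_rimage_inter_of_mem_predual_predual ha hb'.2
        fun x hx => inter_comm b' _ ▸ hb'.2 _ (hf x (ha.1 hx))
  exact ⟨by rw [key, predual_predual_predual_s4 fun _ ha => ha.1], key⟩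

end FinitenessPaper
end

section
/- For every finiteness space 𝒜 with |𝒜| ≠ ∅, the support relation supp ⊆ M(|𝒜|) × |𝒜| (relating each finite multiset to the elements of its support) is not finitary from !𝒜 to 𝒜. -/
open Set

namespace FinitenessPaper

/-- Reverse relation. -/
def rrev {α β : Type*} (f : Set (α × β)) : Set (β × α) := {p | (p.2, p.1) ∈ f}

/-- A relation is finitary between two (webs with) finiteness structures. -/
def FinitaryRel {α β : Type*} (Aw : Set α) (AF : Set (Set α)) (Bw : Set β)
    (BF : Set (Set β)) (f : Set (α × β)) : Prop :=
  (∀ a ∈ AF, rimage f a ∈ BF) ∧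
  ∀ b' ∈ predual Bw BF, rimage (rrev f) b' ∈ predual Aw AF

/-- `M(a)`: the set of finite multisets all of whose elements lie in `a`. -/
def bangSet {α : Type*} (a : Set α) : Set (Multiset α) := {μ | ∀ x ∈ μ, x ∈ a}

/-! Finite subsets of the web are finitary both in `𝒜` and in `𝒜^⊥`. Fix `x` in the web: the
multisets `x^n`, `n ≥ 1`, all have support `{x}`, so they form a finitary set of `!𝒜`, and each of
them lies in the reverse image of the antifinitary set `{x}` under `supp`. That reverse image
therefore meets a finitary set of `!𝒜` in an infinite set, which a finitary relation forbids. -/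

section

variable {α β : Type*}

lemma mem_predual_of_finite_s8 {A : Set α} {F : Set (Set α)} {a' : Set α} (hA : a' ⊆ A)
    (hfin : a'.Finite) : a' ∈ predual A F :=
  ⟨hA, fun _ _ => hfin.subset inter_subset_right⟩

lemma FinSpace.mem_fin_of_finite (A : FinSpace α) {a : Set α} (hA : a ⊆ A.web)
    (hfin : a.Finite) : a ∈ A.fin := by
  rw [← A.isFin]
  exact mem_predual_of_finite_s8 hA hfin

lemma not_finitaryRel_of_infinite_subset {Aw : Set α} {AF : Set (Set α)} {Bw : Set β}
    {BF : Set (Set β)} {f : Set (α × β)} {a : Set α} {b' : Set β} (ha : a ∈ AF)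
    (hb' : b' ∈ predual Bw BF) (hsub : a ⊆ rimage (rrev f) b') (hinf : a.Infinite) :
    ¬ FinitaryRel Aw AF Bw BF f := by
  rintro ⟨-, hrev⟩
  exact hinf (((hrev b' hb').2 a ha).subset (subset_inter subset_rfl hsub))

lemma bangSet_mono {a b : Set α} (h : a ⊆ b) : bangSet a ⊆ bangSet b :=
  fun _ hμ x hx => h (hμ x hx)

lemma replicate_mem_bangSet_singleton {x : α} {n : ℕ} :
    Multiset.replicate n x ∈ bangSet {x} :=
  fun _ hy => Multiset.eq_of_mem_replicate hy

lemma biUnion_support_subset {a : Set α} {s : Set (Multiset α)} (hs : s ⊆ bangSet a) :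
    (⋃ μ ∈ s, {x : α | x ∈ μ}) ⊆ a :=
  iUnion₂_subset fun _ hμ x hx => hs hμ x hx

lemma infinite_range_replicate_succ (x : α) :
    (range fun n : ℕ => Multiset.replicate (n + 1) x).Infinite :=
  infinite_range_of_injective ((Multiset.replicate_left_injective x).comp (add_left_injective 1))

end

/-- The support relation from `M(|𝒜|)` to `|𝒜|` is never finitary from `!𝒜` to
`𝒜` when the web of `𝒜` is nonempty. -/
theorem supp_not_finitary {α : Type*} (A : FinSpace α) (hA : A.web.Nonempty) :
    ¬ FinitaryRel (bangSet A.web)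
        {s | s ⊆ bangSet A.web ∧ (⋃ μ ∈ s, {x : α | x ∈ μ}) ∈ A.fin}
        A.web A.fin
        {p : Multiset α × α | (∀ x ∈ p.1, x ∈ A.web) ∧ p.2 ∈ p.1} := by
  obtain ⟨x, hx⟩ := hA
  have hx_web : {x} ⊆ A.web := singleton_subset_iff.2 hx
  have hpowers_bang : range (fun n : ℕ => Multiset.replicate (n + 1) x) ⊆ bangSet {x} := by
    rintro _ ⟨n, rfl⟩
    exact replicate_mem_bangSet_singleton
  have hsupport := biUnion_support_subset hpowers_bang
  refine not_finitaryRel_of_infinite_subset ⟨hpowers_bang.trans (bangSet_mono hx_web), ?_⟩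
    (mem_predual_of_finite_s8 hx_web (finite_singleton x)) ?_ (infinite_range_replicate_succ x)
  · exact A.mem_fin_of_finite (hsupport.trans hx_web) ((finite_singleton x).subset hsupport)
  · rintro _ ⟨n, rfl⟩
    exact ⟨x, rfl, bangSet_mono hx_web replicate_mem_bangSet_singleton,
      Multiset.mem_replicate.2 ⟨n.succ_ne_zero, rfl⟩⟩

end FinitenessPaper
end

section
/- Finite tensor products of finiteness spaces are directly continuous: for every finiteness space 𝒜 and every ⊑-directed family (ℬ_j)_{j∈J} of finiteness spaces, 𝒜 ⊗ (⊔_{j∈J} ℬ_j) = ⊔_{j∈J} (𝒜 ⊗ ℬ_j). -/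
/-!
Each inclusion is tested on sections: to see
that a projection `f '' s` meets a set `b` finitely, choose `d ⊆ s` on which `f` is injective with
`f '' d = b ∩ f '' s`, and show that `d` is finite. For `(⋃ⱼ 𝒜 ⊗ ℬⱼ)^⊥⊥ ⊆ 𝒜 ⊗ ⊔ⱼ ℬⱼ` such a
section of `c` lies in `(⋃ⱼ 𝒜 ⊗ ℬⱼ)^⊥`. Conversely, for `c ∈ 𝒜 ⊗ ⊔ⱼ ℬⱼ` and `u ∈ (⋃ⱼ 𝒜 ⊗ ℬⱼ)^⊥`,
sections of `u ∩ c` lie in some `𝒜 ⊗ ℬⱼ`, which shows first that `π₂[u ∩ c]` is finite and then,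
using directedness to put that finite set inside a single web `|ℬⱼ|`, that `π₁[u ∩ c]` is finite.
-/

open Set

namespace FinitenessPaper

/-- Finiteness inclusion order. -/
def fsLE {α : Type*} (A B : FinSpace α) : Prop := A.web ⊆ B.web ∧ A.fin ⊆ B.fin

/-- The finiteness structure of the tensor product: subsets of the product web
whose two projections are finitary. -/
def tensFin {α β : Type*} (Wa : Set α) (Fa : Set (Set α)) (Wb : Set β)
    (Fb : Set (Set β)) : Set (Set (α × β)) :=
  {c | c ⊆ Wa ×ˢ Wb ∧ Prod.fst '' c ∈ Fa ∧ Prod.snd '' c ∈ Fb}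

section Predual

variable {γ δ : Type*}

lemma mem_predual_of_subset_s16 {W : Set γ} {F : Set (Set γ)} {s t : Set γ} (hst : s ⊆ t)
    (ht : t ∈ predual W F) : s ∈ predual W F :=
  ⟨hst.trans ht.1, fun a ha => (ht.2 a ha).subset (inter_subset_inter_right a hst)⟩

lemma mem_predual_of_finite_s16 {W : Set γ} {F : Set (Set γ)} {s : Set γ} (hsW : s ⊆ W)
    (hs : s.Finite) : s ∈ predual W F :=
  ⟨hsW, fun _ _ => hs.subset inter_subset_right⟩

lemma finite_of_subset_mem_predual {W : Set γ} {F : Set (Set γ)} {s t : Set γ}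
    (ht : t ∈ predual W F) (hs : s ∈ F) (hst : s ⊆ t) : s.Finite := by
  simpa only [inter_eq_left.2 hst] using ht.2 s hs

lemma image_mem_predual {f : γ → δ} {s : Set γ} {V : Set δ} {F : Set (Set δ)}
    (hs : MapsTo f s V) (h : ∀ b ∈ F, ∀ d ⊆ s, InjOn f d → f '' d ⊆ b → d.Finite) :
    f '' s ∈ predual V F := by
  refine ⟨hs.image_subset, fun b hb => ?_⟩
  obtain ⟨d, hds, hinj, hd⟩ :=
    SurjOn.exists_subset_injOn_image_eq (f := f) (s := s) (t := b ∩ f '' s) inter_subset_right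
  rw [← hd]
  exact (h b hb d hds hinj (hd ▸ inter_subset_left)).image f

lemma image_mem_predual_predual {f : γ → δ} {W : Set γ} {V : Set δ} {G : Set (Set γ)}
    {F : Set (Set δ)} {c : Set γ} (hf : MapsTo f W V) (hG : ∀ e ∈ G, f '' e ∈ F)
    (hc : c ∈ predual W (predual W G)) : f '' c ∈ predual V (predual V F) := by
  refine image_mem_predual (hf.mono_left hc.1) fun a' ha' d hdc hinj hda' => ?_
  have hd : d ∈ predual W G := by
    refine ⟨hdc.trans hc.1, fun e he => ?_⟩
    refine Finite.of_finite_image ((ha'.2 _ (hG e he)).subset ?_) (hinj.mono inter_subset_right)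
    exact (image_inter_subset _ _ _).trans (inter_subset_inter_right _ hda')
  exact finite_of_subset_mem_predual hc hd hdc

end Predual

namespace FinSpace

variable {α β : Type*}

lemma fin_subset_web (S : FinSpace α) {a : Set α} (ha : a ∈ S.fin) : a ⊆ S.web := by
  rw [← S.isFin] at ha
  exact ha.1

lemma mem_fin_of_subset (S : FinSpace α) {s t : Set α} (hst : s ⊆ t) (ht : t ∈ S.fin) :
    s ∈ S.fin := by
  rw [← S.isFin] at ht ⊢
  exact mem_predual_of_subset_s16 hst ht

lemma mem_fin_of_finite_s16 (S : FinSpace α) {s : Set α} (hsW : s ⊆ S.web) (hs : s.Finite) :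
    s ∈ S.fin := by
  rw [← S.isFin]
  exact mem_predual_of_finite_s16 hsW hs

lemma exists_mem_fin_of_finite {J : Type*} [Nonempty J] {B : J → FinSpace α}
    (hdir : Directed (· ⊆ ·) fun j => (B j).web) {s : Set α} (hs : s.Finite)
    (hsW : s ⊆ ⋃ j, (B j).web) : ∃ j, s ∈ (B j).fin := by
  obtain ⟨j, hj⟩ :=
    hdir.exists_mem_subset_of_finset_subset_biUnion (s := hs.toFinset) (by simpa using hsW)
  exact ⟨j, mem_fin_of_finite_s16 (B j) (by simpa using hj) hs⟩

lemma mem_tensFin (A : FinSpace α) (B : FinSpace β) {d : Set (α × β)} :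
    d ∈ tensFin A.web A.fin B.web B.fin ↔ Prod.fst '' d ∈ A.fin ∧ Prod.snd '' d ∈ B.fin :=
  ⟨fun h => h.2, fun ⟨h₁, h₂⟩ => ⟨fun _ hp => ⟨A.fin_subset_web h₁ (mem_image_of_mem _ hp),
    B.fin_subset_web h₂ (mem_image_of_mem _ hp)⟩, h₁, h₂⟩⟩

end FinSpace

open FinSpace

section Tensor

variable {α β J : Type*} (A : FinSpace α) (B : J → FinSpace β)

lemma predual_predual_iUnion_tensFin_subset :
    predual (A.web ×ˢ ⋃ j, (B j).web) (predual (A.web ×ˢ ⋃ j, (B j).web)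
        (⋃ j, tensFin A.web A.fin (B j).web (B j).fin)) ⊆
      tensFin A.web A.fin (⋃ j, (B j).web)
        (predual (⋃ j, (B j).web) (predual (⋃ j, (B j).web) (⋃ j, (B j).fin))) := by
  intro c hc
  refine ⟨hc.1, ?_, ?_⟩
  · rw [← A.isFin]
    refine image_mem_predual_predual (fun p hp => hp.1) (fun e he => ?_) hc
    obtain ⟨j, -, he₁, -⟩ := mem_iUnion.1 he
    exact he₁
  · refine image_mem_predual_predual (fun p hp => hp.2) (fun e he => ?_) hc
    obtain ⟨j, -, -, he₂⟩ := mem_iUnion.1 he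
    exact mem_iUnion.2 ⟨j, he₂⟩

lemma tensFin_subset_predual_predual_iUnion (hdir : Directed (· ⊆ ·) fun j => (B j).web) :
    tensFin A.web A.fin (⋃ j, (B j).web)
        (predual (⋃ j, (B j).web) (predual (⋃ j, (B j).web) (⋃ j, (B j).fin))) ⊆
      predual (A.web ×ˢ ⋃ j, (B j).web) (predual (A.web ×ˢ ⋃ j, (B j).web)
        (⋃ j, tensFin A.web A.fin (B j).web (B j).fin)) := by
  rintro c ⟨hcW, hc₁, hc₂⟩
  refine ⟨hcW, fun u hu => ?_⟩
  have hsnd : Prod.snd '' (u ∩ c) ∈ predual (⋃ j, (B j).web) (⋃ j, (B j).fin) := by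
    refine image_mem_predual (fun p hp => (hcW hp.2).2) fun b hb d hd _ hdb => ?_
    obtain ⟨j, hbj⟩ := mem_iUnion.1 hb
    have hdj : d ∈ tensFin A.web A.fin (B j).web (B j).fin :=
      (mem_tensFin A (B j)).2 ⟨A.mem_fin_of_subset (image_mono (hd.trans inter_subset_right)) hc₁,
        (B j).mem_fin_of_subset hdb hbj⟩
    exact finite_of_subset_mem_predual hu (mem_iUnion.2 ⟨j, hdj⟩) (hd.trans inter_subset_left)
  have hsnd_fin : (Prod.snd '' (u ∩ c)).Finite :=
    finite_of_subset_mem_predual hc₂ hsnd (image_mono inter_subset_right)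
  have hfst : Prod.fst '' (u ∩ c) ∈ predual A.web A.fin := by
    refine image_mem_predual (fun p hp => (hcW hp.2).1) fun a ha d hd _ hda => ?_
    rcases d.eq_empty_or_nonempty with rfl | ⟨p, hp⟩
    · exact finite_empty
    obtain ⟨j₀, -⟩ := mem_iUnion.1 (hcW (hd hp).2).2
    have : Nonempty J := ⟨j₀⟩
    obtain ⟨j, hdj⟩ := exists_mem_fin_of_finite hdir (hsnd_fin.subset (image_mono hd))
      fun _ ⟨q, hq, hq₂⟩ => hq₂ ▸ (hcW (hd hq).2).2
    have hdj : d ∈ tensFin A.web A.fin (B j).web (B j).fin :=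
      (mem_tensFin A (B j)).2 ⟨A.mem_fin_of_subset hda ha, hdj⟩
    exact finite_of_subset_mem_predual hu (mem_iUnion.2 ⟨j, hdj⟩) (hd.trans inter_subset_left)
  have hfst_fin : (Prod.fst '' (u ∩ c)).Finite :=
    finite_of_subset_mem_predual (A.isFin ▸ hc₁) hfst (image_mono inter_subset_right)
  exact (hfst_fin.prod hsnd_fin).subset fun p hp => ⟨mem_image_of_mem _ hp, mem_image_of_mem _ hp⟩

end Tensor

/-- Finite tensor products are directly continuous: for every finiteness space
`𝒜` and every `⊑`-directed family `(ℬⱼ)` of finiteness spaces,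
`𝒜 ⊗ (⊔ⱼ ℬⱼ) = ⊔ⱼ (𝒜 ⊗ ℬⱼ)` (equality of webs and of finiteness structures). -/
theorem tensor_directly_continuous {α β : Type*} {J : Type*}
    (A : FinSpace α) (B : J → FinSpace β) (hdir : Directed fsLE B) :
    let Wsup : Set β := ⋃ j, (B j).web
    let Fsup : Set (Set β) := predual Wsup (predual Wsup (⋃ j, (B j).fin))
    -- the webs agree
    (A.web ×ˢ Wsup = ⋃ j, A.web ×ˢ (B j).web) ∧
    -- the finiteness structures agree
    (tensFin A.web A.fin Wsup Fsup
      = predual (A.web ×ˢ Wsup) (predual (A.web ×ˢ Wsup)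
          (⋃ j, tensFin A.web A.fin (B j).web (B j).fin))) := by
  have hdir_web : Directed (· ⊆ ·) fun j => (B j).web :=
    Directed.mono_comp fsLE (g := FinSpace.web) (fun _ _ h => h.1) hdir
  exact ⟨prod_iUnion, (tensFin_subset_predual_predual_iUnion A B hdir_web).antisymm
    (predual_predual_iUnion_tensFin_subset A B)⟩

end FinitenessPaper
end
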